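/- Let G be an undirected graph with strictly positive edge weights and φ a strict total ordering of its vertices. For each vertex v lacking a (k,k+1)-ball, let P_v be the shortest path tree with fewest hops connecting v to the k+1 vertices chosen lexicographically by (distance, φ) among candidates. Then each P_v is a path (not merely a tree). -/

import Mathlib

open scoped ENNReal Classical

/-- A walk from `u` is recorded as the list `p` of vertices visited after `u`;
it ends at `v` if the last vertex of `u :: p` is `v`. -/
def WalkEnds {V : Type*} (u : V) (p : List V) (v : V) : Prop := p.getLastD u = v

/-- A weighted (di)graph on vertex set `V`: weight `⊤` means "no edge". -/
structure WGraph (V : Type*) where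
  w : V → V → ℝ≥0∞

namespace WGraph

variable {V : Type*} (G : WGraph V)

/-- Total weight of the walk `u :: p`. -/
noncomputable def walkWeight : V → List V → ℝ≥0∞
  | _, [] => 0
  | u, v :: p => G.w u v + walkWeight v p

/-- Weight distance. -/
noncomputable def dist (u v : V) : ℝ≥0∞ :=
  sInf {c | ∃ p : List V, WalkEnds u p v ∧ G.walkWeight u p = c}

/-- Hop distance: the minimum number of edges among minimum-weight walks;
`⊤` if `v` is unreachable from `u`. -/
noncomputable def hopdist (u v : V) : ℕ∞ :=
  if G.dist u v = ⊤ then ⊤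
  else sInf {n : ℕ∞ | ∃ p : List V, WalkEnds u p v ∧
    G.walkWeight u p = G.dist u v ∧ (p.length : ℕ∞) = n}

/-- The set of vertices reachable from `u`, other than `u` itself. -/
def Reach (u : V) : Set V := {v | v ≠ u ∧ G.dist u v ≠ ⊤}

/-- `S` is a `ρ`-closest neighbor set of `u`. -/
def IsClosest (ρ : ℕ) (u : V) (S : Set V) : Prop :=
  S ⊆ G.Reach u ∧ S.ncard = min (G.Reach u).ncard ρ ∧
    ∀ v ∈ S, ∀ x ∈ G.Reach u \ S, G.dist u v ≤ G.dist u x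

/-- `u` has a `(k,ρ)`-ball: some `ρ`-closest neighbor set lies within hop distance `k`. -/
def HasBall (k ρ : ℕ) (u : V) : Prop :=
  ∃ S : Set V, G.IsClosest ρ u S ∧ ∀ v ∈ S, G.hopdist u v ≤ (k : ℕ∞)

/-- `G` is a `(k,ρ)`-graph. -/
def IsKRhoGraph (k ρ : ℕ) : Prop := ∀ u, G.HasBall k ρ u

/-- `G` is undirected (symmetric weights). -/
def Symm : Prop := ∀ u v, G.w u v = G.w v u

/-- All edge weights are strictly positive (trivial for non-edges of weight `⊤`). -/
def Positive : Prop := ∀ u v, 0 < G.w u v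

/-- `(u,v)` is a (potential) shortcut: `v` is reachable from `u` and the hop distance
exceeds `1`. -/
def IsShortcut (u v : V) : Prop := G.dist u v ≠ ⊤ ∧ 1 < G.hopdist u v

/-- Add each pair in `S` as a directed edge of weight `G.dist`. -/
noncomputable def addD (S : Set (V × V)) : WGraph V :=
  ⟨fun a b => G.w a b ⊓ sInf {c | (a, b) ∈ S ∧ c = G.dist a b}⟩

/-- Add each pair in `S` as an undirected edge of weight `G.dist`. -/
noncomputable def addU (S : Set (V × V)) : WGraph V :=
  ⟨fun a b => G.w a b ⊓ sInf {c | ((a, b) ∈ S ∨ (b, a) ∈ S) ∧ c = G.dist a b}⟩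

/-- `S` is a (directed) `(k,ρ)`-shortcut set for `G`. -/
def IsShortcutSetD (k ρ : ℕ) (S : Set (V × V)) : Prop :=
  (∀ p ∈ S, G.IsShortcut p.1 p.2) ∧ (G.addD S).IsKRhoGraph k ρ ∧
    ∀ x y, (G.addD S).dist x y = G.dist x y

/-- `S` is an (undirected) `(k,ρ)`-shortcut set for `G`. -/
def IsShortcutSetU (k ρ : ℕ) (S : Set (V × V)) : Prop :=
  (∀ p ∈ S, G.IsShortcut p.1 p.2) ∧ (G.addU S).IsKRhoGraph k ρ ∧
    ∀ x y, (G.addU S).dist x y = G.dist x y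

end WGraph

namespace WGraph

variable {V : Type*} (G : WGraph V)

/-- The union of all `ρ`-closest neighbor sets of `v`. -/
def closestUnion (ρ : ℕ) (v : V) : Set V :=
  {u | ∃ S : Set V, G.IsClosest ρ v S ∧ u ∈ S}

/-- `Sφ` is the set of the `min(|R_v|,ρ)` smallest elements of the union of all
`ρ`-closest neighbor sets of `v`, under the lexicographic order on `(dist(v,·), φ(·))`. -/
def IsPhiSet (φ : V → ℕ) (ρ : ℕ) (v : V) (Sφ : Set V) : Prop :=
  Sφ ⊆ G.closestUnion ρ v ∧ Sφ.ncard = min (G.Reach v).ncard ρ ∧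
    ∀ a ∈ Sφ, ∀ b ∈ G.closestUnion ρ v \ Sφ,
      G.dist v a < G.dist v b ∨ (G.dist v a = G.dist v b ∧ φ a < φ b)

end WGraph

/-- A shortest-path-with-fewest-hops tree rooted at `v` spanning `S`:
for each `s ∈ S` a walk from `v` to `s` of minimum weight and, among those, fewest
hops, such that the walks cohere into a tree (each vertex has a unique path from the
root, expressed by equality of the prefixes up to the first occurrence). -/
structure FHTree {V : Type*} [DecidableEq V] (G : WGraph V) (v : V) (S : Set V) where
  walk : (s : V) → s ∈ S → List V
  ends : ∀ s hs, WalkEnds v (walk s hs) s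
  minWeight : ∀ s hs, G.walkWeight v (walk s hs) = G.dist v s
  fewHops : ∀ s hs, ((walk s hs).length : ℕ∞) = G.hopdist v s
  coherent : ∀ s hs t ht (x : V), x ∈ walk s hs → x ∈ walk t ht →
    (walk s hs).take ((walk s hs).idxOf x + 1) =
      (walk t ht).take ((walk t ht).idxOf x + 1)

namespace FHTree

variable {V : Type*} [DecidableEq V] {G : WGraph V} {v : V} {S : Set V}

/-- The tree is a path: the walks are totally ordered by the prefix relation. -/
def IsPath (T : FHTree G v S) : Prop :=
  ∀ s hs t ht, T.walk s hs <+: T.walk t ht ∨ T.walk t ht <+: T.walk s hs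

/-- The vertex set of the tree. -/
def verts (T : FHTree G v S) : Set V :=
  insert v {x | ∃ s hs, x ∈ T.walk s hs}

/-- The edge set of the tree, as unordered pairs. -/
def edges (T : FHTree G v S) : Set (Sym2 V) :=
  {e | ∃ s hs, ∃ l₁ l₂ : List V, ∃ a b : V,
    v :: T.walk s hs = l₁ ++ a :: b :: l₂ ∧ e = s(a, b)}

end FHTree

section Aux

variable {V : Type*}

lemma getLastD_append' (p q : List V) (u : V) :
    (p ++ q).getLastD u = q.getLastD (p.getLastD u) := by
  induction p generalizing u with
  | nil => rfl
  | cons a p ih =>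
    rw [List.cons_append, List.getLastD_cons, List.getLastD_cons, ih]

lemma getLastD_congr {l : List V} (hl : l ≠ []) (d d' : V) :
    l.getLastD d = l.getLastD d' := by
  cases l with
  | nil => exact absurd rfl hl
  | cons a l => rw [List.getLastD_cons, List.getLastD_cons]

lemma not_nodup_decomp : ∀ (l : List V), ¬ l.Nodup →
    ∃ (l₁ : List V) (x : V) (l₂ l₃ : List V), l = l₁ ++ x :: l₂ ++ x :: l₃ := by
  intro l
  induction l with
  | nil => intro h; exact absurd List.nodup_nil h
  | cons a l ih =>
    intro h
    rw [List.nodup_cons] at h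
    push_neg at h
    by_cases ha : a ∈ l
    · obtain ⟨l₂, l₃, rfl⟩ := List.append_of_mem ha
      exact ⟨[], a, l₂, l₃, rfl⟩
    · obtain ⟨l₁, x, l₂, l₃, rfl⟩ := ih (h ha)
      exact ⟨a :: l₁, x, l₂, l₃, rfl⟩

namespace WGraph

lemma walkWeight_append (G : WGraph V) (u : V) (p q : List V) :
    G.walkWeight u (p ++ q) = G.walkWeight u p + G.walkWeight (p.getLastD u) q := by
  induction p generalizing u with
  | nil => simp [walkWeight]
  | cons a p ih =>
    rw [List.cons_append]
    simp only [walkWeight]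
    rw [ih, List.getLastD_cons, add_assoc]

lemma dist_le_walkWeight (G : WGraph V) {u x : V} {p : List V} (h : WalkEnds u p x) :
    G.dist u x ≤ G.walkWeight u p := sInf_le ⟨p, h, rfl⟩

lemma walkWeight_pos (G : WGraph V) (hpos : G.Positive) (u : V) {p : List V} (hp : p ≠ []) :
    0 < G.walkWeight u p := by
  cases p with
  | nil => exact absurd rfl hp
  | cons a p =>
    refine lt_of_lt_of_le (hpos u a) ?_
    simp only [walkWeight]
    exact le_self_add

lemma minwalk_nodup (G : WGraph V) (hpos : G.Positive) {v s : V} {p : List V}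
    (hends : WalkEnds v p s) (hw : G.walkWeight v p = G.dist v s) (hfin : G.dist v s ≠ ⊤) :
    (v :: p).Nodup := by
  by_contra h
  obtain ⟨l₁, x, l₂, l₃, hdec⟩ := not_nodup_decomp _ h
  cases l₁ with
  | nil =>
    rw [List.nil_append] at hdec
    injection hdec with h1 h2
    subst h1; subst h2
    simp only [List.append_eq] at hends hw
    have hrw : l₂ ++ v :: l₃ = (l₂ ++ [v]) ++ l₃ := by simp
    rw [hrw] at hends hw
    rw [G.walkWeight_append v (l₂ ++ [v]) l₃, List.getLastD_concat] at hw
    have hends' : WalkEnds v l₃ s := by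
      unfold WalkEnds at hends ⊢
      rw [getLastD_append', List.getLastD_concat] at hends
      cases l₃ with
      | nil => simpa using hends
      | cons b l => rw [← getLastD_congr (List.cons_ne_nil b l) v v]; exact hends
    have hr_ne : G.walkWeight v l₃ ≠ ⊤ := by
      intro htop
      rw [htop, add_top] at hw
      exact hfin hw.symm
    have hlt : G.walkWeight v l₃ < G.dist v s := by
      rw [← hw, add_comm]
      exact ENNReal.lt_add_right hr_ne
        (G.walkWeight_pos hpos v (by simp : l₂ ++ [v] ≠ [])).ne'
    exact absurd (G.dist_le_walkWeight hends') (not_le.mpr hlt)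
  | cons a l₁' =>
    rw [List.cons_append] at hdec
    injection hdec with h1 h2
    subst h1; subst h2
    simp only [List.append_eq] at hends hw
    have hrw : l₁' ++ x :: l₂ ++ x :: l₃ = (l₁' ++ [x]) ++ ((l₂ ++ [x]) ++ l₃) := by simp
    rw [hrw] at hends hw
    rw [G.walkWeight_append v (l₁' ++ [x]) ((l₂ ++ [x]) ++ l₃), List.getLastD_concat,
      G.walkWeight_append x (l₂ ++ [x]) l₃, List.getLastD_concat] at hw
    set A := G.walkWeight v (l₁' ++ [x]) with hA
    set B := G.walkWeight x (l₂ ++ [x]) with hB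
    set r := G.walkWeight x l₃ with hr
    have hends' : WalkEnds v ((l₁' ++ [x]) ++ l₃) s := by
      unfold WalkEnds at hends ⊢
      rw [getLastD_append', List.getLastD_concat] at hends ⊢
      rw [getLastD_append', List.getLastD_concat] at hends
      exact hends
    have hwq : G.walkWeight v ((l₁' ++ [x]) ++ l₃) = A + r := by
      rw [walkWeight_append, List.getLastD_concat]
    have hAr_ne : A + r ≠ ⊤ := by
      intro htop
      apply hfin
      rw [← hw]
      rcases ENNReal.add_eq_top.mp htop with h | h
      · rw [h, top_add]
      · rw [h, add_top, add_top]
    have hlt : A + r < G.dist v s := by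
      have : A + (B + r) = (A + r) + B := by ring
      rw [← hw, this]
      exact ENNReal.lt_add_right hAr_ne
        (G.walkWeight_pos hpos x (by simp : l₂ ++ [x] ≠ [])).ne'
    exact absurd (G.dist_le_walkWeight hends') (not_le.mpr (hwq ▸ hlt))

lemma dist_prefix_lt (G : WGraph V) (hpos : G.Positive) {v s : V} {p₁ p₂ : List V}
    (hp₂ : p₂ ≠ []) (hw : G.walkWeight v (p₁ ++ p₂) = G.dist v s)
    (hfin : G.dist v s ≠ ⊤) :
    G.dist v (p₁.getLastD v) < G.dist v s := by
  rw [walkWeight_append] at hw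
  have hA_ne : G.walkWeight v p₁ ≠ ⊤ := by
    intro htop
    rw [htop, top_add] at hw
    exact hfin hw.symm
  have h1 : G.dist v (p₁.getLastD v) ≤ G.walkWeight v p₁ :=
    G.dist_le_walkWeight rfl
  refine lt_of_le_of_lt h1 ?_
  rw [← hw]
  exact ENNReal.lt_add_right hA_ne (G.walkWeight_pos hpos _ hp₂).ne'

lemma closestUnion_subset_reach (G : WGraph V) (ρ : ℕ) (v : V) :
    G.closestUnion ρ v ⊆ G.Reach v := by
  rintro u ⟨S, hS, hu⟩
  exact hS.1 hu

lemma mem_closestUnion_of_le (G : WGraph V) [Finite V] {ρ : ℕ} {v u s : V}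
    (hu : u ∈ G.Reach v) (hs : s ∈ G.closestUnion ρ v) (hle : G.dist v u ≤ G.dist v s) :
    u ∈ G.closestUnion ρ v := by
  obtain ⟨S, hS, hsS⟩ := hs
  by_cases huS : u ∈ S
  · exact ⟨S, hS, huS⟩
  have hSfin : S.Finite := Set.toFinite S
  obtain ⟨m, hmS, hmax⟩ := Finset.exists_max_image hSfin.toFinset (G.dist v)
    ⟨s, hSfin.mem_toFinset.mpr hsS⟩
  rw [hSfin.mem_toFinset] at hmS
  have hmax' : ∀ x ∈ S, G.dist v x ≤ G.dist v m := fun x hx =>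
    hmax x (hSfin.mem_toFinset.mpr hx)
  have hle' : G.dist v u ≤ G.dist v m := hle.trans (hmax' s hsS)
  refine ⟨insert u (S \ {m}), ⟨?_, ?_, ?_⟩, Set.mem_insert u _⟩
  · rintro x (rfl | hx)
    · exact hu
    · exact hS.1 hx.1
  · rw [Set.ncard_insert_of_notMem (fun hx => huS hx.1),
      Set.ncard_diff_singleton_of_mem hmS]
    rw [← hS.2.1]
    have hpos' : 0 < S.ncard := (Set.ncard_pos hSfin).mpr ⟨m, hmS⟩
    omega
  · rintro a (rfl | haS) x ⟨hxR, hxS'⟩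
    · by_cases hxS : x ∈ S
      · have hxm : x = m := by
          by_contra hxm
          exact hxS' (Set.mem_insert_of_mem _ ⟨hxS, hxm⟩)
        exact hxm ▸ hle'
      · exact hle.trans (hS.2.2 s hsS x ⟨hxR, hxS⟩)
    · by_cases hxS : x ∈ S
      · have hxm : x = m := by
          by_contra hxm
          exact hxS' (Set.mem_insert_of_mem _ ⟨hxS, hxm⟩)
        exact hxm ▸ hmax' a haS.1
      · exact hS.2.2 a haS.1 x ⟨hxR, hxS⟩

lemma isClosest_of_isPhiSet (G : WGraph V) {φ : V → ℕ} {ρ : ℕ} {v : V} {Sφ : Set V}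
    (h : G.IsPhiSet φ ρ v Sφ) : G.IsClosest ρ v Sφ := by
  obtain ⟨hsub, hcard, hlex⟩ := h
  refine ⟨fun a ha => G.closestUnion_subset_reach ρ v (hsub ha), hcard, ?_⟩
  intro a ha x hx
  by_cases hxc : x ∈ G.closestUnion ρ v
  · rcases hlex a ha x ⟨hxc, hx.2⟩ with h' | ⟨h', _⟩
    · exact h'.le
    · exact h'.le
  · obtain ⟨S, hS, haS⟩ := hsub ha
    have hxS : x ∉ S := fun hxS => hxc ⟨S, hS, hxS⟩
    exact hS.2.2 a haS x ⟨hx.1, hxS⟩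

end WGraph

end Aux

/-- for a strict ordering `φ` of the vertices, for every vertex `v`
lacking a `(k,k+1)`-ball, the shortest-path-with-fewest-hops tree connecting `v` to
the `k+1` vertices chosen lexicographically by `(dist, φ)` among the candidates is a
path. -/
theorem stmt4 {V : Type*} [Finite V] [DecidableEq V] (G : WGraph V)
    (hsym : G.Symm) (hpos : G.Positive) (φ : V → ℕ) (hφ : Function.Injective φ)
    (k : ℕ) (hk : 1 ≤ k) :
    ∀ v : V, ¬ G.HasBall k (k + 1) v → ∀ Sφ : Set V, G.IsPhiSet φ (k + 1) v Sφ →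
      ∀ T : FHTree G v Sφ, T.IsPath := by
  intro v hball Sφ hphi T
  have hclosest := G.isClosest_of_isPhiSet hphi
  have hSsubU : Sφ ⊆ G.closestUnion (k+1) v := hphi.1
  have hSsubR : Sφ ⊆ G.Reach v := hclosest.1
  simp only [WGraph.HasBall, not_exists, not_and, not_forall, not_le] at hball
  obtain ⟨s, hsS, hshop⟩ := hball Sφ hclosest
  have hfin : G.dist v s ≠ ⊤ := (hSsubR hsS).2
  have hends : WalkEnds v (T.walk s hsS) s := T.ends s hsS
  have hwp : G.walkWeight v (T.walk s hsS) = G.dist v s := T.minWeight s hsS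
  have hnodup : (v :: T.walk s hsS).Nodup := G.minwalk_nodup hpos hends hwp hfin
  have hpnodup : (T.walk s hsS).Nodup := (List.nodup_cons.mp hnodup).2
  have hvnot : v ∉ T.walk s hsS := (List.nodup_cons.mp hnodup).1
  have hlen : k + 1 ≤ (T.walk s hsS).length := by
    have h1 : (k : ℕ∞) < ((T.walk s hsS).length : ℕ∞) := by
      rw [T.fewHops s hsS]; exact hshop
    exact_mod_cast h1
  have hmem : ∀ u ∈ T.walk s hsS, u ∈ Sφ := by
    intro u hu
    by_cases hus : u = s
    · exact hus ▸ hsS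
    obtain ⟨p₁, p₂, hd⟩ := List.append_of_mem hu
    have hp₂ : p₂ ≠ [] := by
      rintro rfl
      apply hus
      have h2 := hends
      rw [hd] at h2
      unfold WalkEnds at h2
      rw [List.getLastD_concat] at h2
      exact h2
    have hd' : T.walk s hsS = (p₁ ++ [u]) ++ p₂ := by rw [hd]; simp
    have hlt : G.dist v u < G.dist v s := by
      have h := G.dist_prefix_lt hpos (p₁ := p₁ ++ [u]) hp₂ (by rw [← hd']; exact hwp) hfin
      rwa [List.getLastD_concat] at h
    have huR : u ∈ G.Reach v := by
      refine ⟨?_, ?_⟩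
      · rintro rfl; exact hvnot hu
      · exact (hlt.trans (Ne.lt_top hfin)).ne
    have huC := G.mem_closestUnion_of_le huR (hSsubU hsS) hlt.le
    by_contra huSφ
    rcases hphi.2.2 s hsS u ⟨huC, huSφ⟩ with h' | ⟨h', _⟩
    · exact absurd hlt (not_lt.mpr h'.le)
    · rw [h'] at hlt; exact lt_irrefl _ hlt
  have hSset : {x | x ∈ T.walk s hsS} = Sφ := by
    have hsub2 : {x | x ∈ T.walk s hsS} ⊆ Sφ := fun x hx => hmem x hx
    apply Set.eq_of_subset_of_ncard_le hsub2 ?_ (Set.toFinite _)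
    have h1 : {x | x ∈ T.walk s hsS} = ↑(T.walk s hsS).toFinset := by
      ext x; simp
    rw [h1, Set.ncard_coe_finset, List.toFinset_card_of_nodup hpnodup]
    calc Sφ.ncard = min (G.Reach v).ncard (k+1) := hphi.2.1
      _ ≤ k + 1 := min_le_right _ _
      _ ≤ _ := hlen
  have hpref : ∀ t (ht : t ∈ Sφ), T.walk t ht <+: T.walk s hsS := by
    intro t ht
    have htp : t ∈ T.walk s hsS := by rw [← hSset] at ht; exact ht
    have hqe : WalkEnds v (T.walk t ht) t := T.ends t ht
    have hfin' : G.dist v t ≠ ⊤ := (hSsubR ht).2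
    have hqnd : (v :: T.walk t ht).Nodup :=
      G.minwalk_nodup hpos hqe (T.minWeight t ht) hfin'
    have hqnodup : (T.walk t ht).Nodup := (List.nodup_cons.mp hqnd).2
    have hqnil : T.walk t ht ≠ [] := by
      intro hq
      apply (hSsubR ht).1
      rw [hq] at hqe
      exact hqe.symm
    have hlast : (T.walk t ht).getLast hqnil = t := by
      have h2 := hqe
      unfold WalkEnds at h2
      rw [List.getLastD_eq_getLast?, List.getLast?_eq_getLast hqnil] at h2
      simpa using h2
    have hq : (T.walk t ht).dropLast ++ [t] = T.walk t ht := by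
      conv_rhs => rw [← List.dropLast_append_getLast hqnil]
      rw [hlast]
    have htq : t ∈ T.walk t ht := by rw [← hq]; simp
    have hnotd : t ∉ (T.walk t ht).dropLast := by
      intro hmem'
      have h3 := hqnodup
      rw [← hq] at h3
      rcases List.nodup_append'.mp h3 with ⟨_, _, hdisj⟩
      exact hdisj hmem' (List.mem_singleton_self t)
    have hidx : (T.walk t ht).idxOf t = (T.walk t ht).dropLast.length := by
      conv_lhs => rw [← hq]
      rw [List.idxOf_append_of_notMem hnotd]
      simp
    have htake : (T.walk t ht).take ((T.walk t ht).idxOf t + 1) = T.walk t ht := by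
      rw [hidx]
      apply List.take_of_length_le
      have hlp : 0 < (T.walk t ht).length := List.length_pos_iff.mpr hqnil
      rw [List.length_dropLast]
      omega
    have hco := T.coherent t ht s hsS t htq htp
    rw [htake] at hco
    rw [hco]
    exact List.take_prefix _ _
  intro s1 hs1 t1 ht1
  exact List.prefix_or_prefix_of_prefix (hpref s1 hs1) (hpref t1 ht1)
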